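/- arXiv:math/0701755 — 3 statements merged into one kernel-verified Lean document; each statement's English description precedes it below -/
import Mathlib

section
/- For any partition λ, the number of partitions μ differing from λ by a square equals 2·ℓ̄(λ) + 1, where ℓ̄(λ) is the number of distinct (nonzero) parts of λ. -/
structure Ptn where
  parts : ℕ → ℕ
  antitone : ∀ m n : ℕ, m ≤ n → parts n ≤ parts m
  finite : ∃ N : ℕ, ∀ n : ℕ, N ≤ n → parts n = 0

namespace Ptn

/-- 1-indexed Young diagram of a partition. -/
def ycells (l : Ptn) : Set (ℕ × ℕ) :=
  {p | 1 ≤ p.1 ∧ 1 ≤ p.2 ∧ p.2 ≤ l.parts (p.1 - 1)}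

/-- number of cells, `|λ|`. -/
noncomputable def size (l : Ptn) : ℕ := l.ycells.ncard

/-- number of nonzero parts, `ℓ(λ)`. -/
noncomputable def length (l : Ptn) : ℕ := {i : ℕ | l.parts i ≠ 0}.ncard

/-- `λ` and `μ` differ by a square. -/
def Differs (l m : Ptn) : Prop :=
  ∃ i : ℕ, (l.parts i = m.parts i + 1 ∨ m.parts i = l.parts i + 1) ∧
    ∀ k : ℕ, k ≠ i → l.parts k = m.parts k

/-- `λ` and `μ` differ by a square whose content is `d`. -/
def DiffersAt (l m : Ptn) (d : ℤ) : Prop :=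
  ∃ i : ℕ, (l.parts i = m.parts i + 1 ∨ m.parts i = l.parts i + 1) ∧
    (∀ k : ℕ, k ≠ i → l.parts k = m.parts k) ∧
    (max (l.parts i) (m.parts i) : ℤ) - 1 - (i : ℤ) = d

/-- `ρ_d(λ)`: number of cells of content `d`. -/
noncomputable def rho (l : Ptn) (d : ℤ) : ℕ :=
  {p ∈ l.ycells | (p.2 : ℤ) - (p.1 : ℤ) = d}.ncard

/-- rank: number of diagonal cells. -/
noncomputable def rank (l : Ptn) : ℕ := {i : ℕ | i < l.parts i}.ncard

/-- conjugate partition parts (0-indexed). -/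
noncomputable def conj (l : Ptn) (k : ℕ) : ℕ := {i : ℕ | k < l.parts i}.ncard

end Ptn

/-- `R_d(T)`: number of points of `T` of content `d`. -/
noncomputable def Rd (T : Set (ℕ × ℕ)) (d : ℤ) : ℕ :=
  {p ∈ T | (p.2 : ℤ) - (p.1 : ℤ) = d}.ncard

/-- `c` is the `(a,b)`-complement of `l`. -/
def IsComplementOf (a b : ℕ) (c l : Ptn) : Prop :=
  ∀ k : ℕ, c.parts k = if k < a then b - l.parts (a - 1 - k) else 0

/-!
A partition `μ` differs from `λ` by a square exactly when it arises from `λ` by adding a box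
at the end of an addable row `i` (`i = 0` or `λᵢ < λᵢ₋₁`) or removing the last box of a
removable row `i` (`λᵢ₊₁ < λᵢ`). The removable rows are the last rows of each block of equal
nonzero parts, so they correspond bijectively to the distinct nonzero parts, and the addable
rows are row `0` together with the rows just below the removable ones. Hence there are
`ℓ̄(λ) + 1` ways to add and `ℓ̄(λ)` ways to remove a square.
-/

namespace Ptn

lemma parts_injective : Function.Injective Ptn.parts := by
  rintro ⟨_, _, _⟩ ⟨_, _, _⟩ rfl
  rfl

def updatePart (l : Ptn) (i v : ℕ) (hnext : l.parts (i + 1) ≤ v)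
    (hprev : ∀ j, i = j + 1 → v ≤ l.parts j) : Ptn where
  parts := Function.update l.parts i v
  antitone := by
    refine fun _ _ h => antitone_nat_of_succ_le (fun k => ?_) h
    rcases eq_or_ne (k + 1) i with rfl | hk
    · simpa [Function.update_of_ne (Nat.succ_ne_self k).symm] using hprev k rfl
    rcases eq_or_ne k i with rfl | hk'
    · simpa [Function.update_of_ne hk] using hnext
    simpa [Function.update_of_ne hk, Function.update_of_ne hk'] using l.antitone k (k + 1) k.le_succ
  finite := by
    obtain ⟨N, hN⟩ := l.finite
    refine ⟨max N (i + 1), fun n hn => ?_⟩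
    rw [Function.update_of_ne (by omega)]
    exact hN n (by omega)

lemma eq_updatePart_iff {l m : Ptn} {i v : ℕ} {hnext hprev} :
    m = l.updatePart i v hnext hprev ↔ m.parts i = v ∧ ∀ k, k ≠ i → l.parts k = m.parts k := by
  rw [← parts_injective.eq_iff, eq_comm]
  exact Function.update_eq_iff.trans (and_congr_left' eq_comm)

/-- `i = 0 ∨ λᵢ < λᵢ₋₁`, phrased without truncated subtraction. -/
def addableRows (l : Ptn) : Set ℕ := {i | ∀ j, i = j + 1 → l.parts i < l.parts j}

def removableRows (l : Ptn) : Set ℕ := {i | l.parts (i + 1) < l.parts i}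

def addBox (l : Ptn) (i : l.addableRows) : Ptn :=
  l.updatePart i (l.parts i + 1) ((l.antitone _ _ (Nat.le_succ i)).trans (Nat.le_succ _))
    fun j hj => i.2 j hj

def removeBox (l : Ptn) (i : l.removableRows) : Ptn :=
  l.updatePart i (l.parts i - 1) (Nat.le_sub_one_of_lt i.2)
    fun j hj => (Nat.sub_le _ _).trans (l.antitone j i (by omega))

lemma setOf_differs (l : Ptn) :
    {m | l.Differs m} = Set.range l.addBox ∪ Set.range l.removeBox := by
  ext m
  simp only [Set.mem_ofPred_eq, Set.mem_union, Set.mem_range, addBox, removeBox, Subtype.exists,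
    eq_comm (b := m), eq_updatePart_iff]
  constructor
  · rintro ⟨i, hi | hi, hrest⟩
    · refine Or.inr ⟨i, ?_, by omega, hrest⟩
      have := hrest (i + 1) (by omega)
      have := m.antitone i (i + 1) i.le_succ
      simp only [removableRows, Set.mem_ofPred_eq]
      omega
    · refine Or.inl ⟨i, fun j hj => ?_, hi, hrest⟩
      have := hrest j (by omega)
      have := m.antitone j i (by omega)
      omega
  · rintro (⟨i, -, hi, hrest⟩ | ⟨i, hrem, hi, hrest⟩)
    · exact ⟨i, Or.inr hi, hrest⟩
    · refine ⟨i, Or.inl ?_, hrest⟩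
      simp only [removableRows, Set.mem_ofPred_eq] at hrem
      omega

lemma parts_addBox_apply (l : Ptn) (i : l.addableRows) (k : ℕ) :
    (l.addBox i).parts k = if k = i then l.parts i + 1 else l.parts k := by
  simp only [addBox, updatePart, Function.update_apply]

lemma parts_removeBox_apply (l : Ptn) (i : l.removableRows) (k : ℕ) :
    (l.removeBox i).parts k = if k = i then l.parts i - 1 else l.parts k := by
  simp only [removeBox, updatePart, Function.update_apply]

lemma addBox_injective (l : Ptn) : Function.Injective l.addBox := by
  intro i j hij
  have := congr_arg (·.parts i) hij
  simp only [parts_addBox_apply, if_true] at this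
  split_ifs at this with h
  · exact Subtype.ext h
  · omega

lemma removeBox_injective (l : Ptn) : Function.Injective l.removeBox := by
  intro i j hij
  have hi : l.parts (i + 1) < l.parts i := i.2
  have := congr_arg (·.parts i) hij
  simp only [parts_removeBox_apply, if_true] at this
  split_ifs at this with h
  · exact Subtype.ext h
  · omega

lemma parts_le_parts_addBox (l : Ptn) (i : l.addableRows) (k : ℕ) :
    l.parts k ≤ (l.addBox i).parts k := by
  rw [parts_addBox_apply]
  split_ifs with h
  · rw [h]
    exact Nat.le_succ _
  · exact le_rfl

lemma parts_removeBox_self_lt (l : Ptn) (i : l.removableRows) :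
    (l.removeBox i).parts i < l.parts i := by
  have hi : l.parts (i + 1) < l.parts i := i.2
  rw [parts_removeBox_apply, if_pos rfl]
  omega

lemma disjoint_range_addBox_range_removeBox (l : Ptn) :
    Disjoint (Set.range l.addBox) (Set.range l.removeBox) := by
  rw [Set.disjoint_left]
  rintro _ ⟨i, rfl⟩ ⟨j, hji⟩
  have := l.parts_removeBox_self_lt j
  rw [hji] at this
  exact (l.parts_le_parts_addBox i j).not_gt this

lemma removableRows_finite (l : Ptn) : l.removableRows.Finite := by
  obtain ⟨N, hN⟩ := l.finite
  refine (Set.finite_Iio N).subset fun i hi => ?_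
  by_contra h
  simp only [removableRows, Set.mem_ofPred_eq, Set.mem_Iio, not_lt] at hi h
  rw [hN i h] at hi
  omega

lemma addableRows_eq_insert (l : Ptn) :
    l.addableRows = insert 0 ((· + 1) '' l.removableRows) := by
  ext (_ | i) <;> simp [addableRows, removableRows]

instance (l : Ptn) : Finite l.removableRows := l.removableRows_finite.to_subtype

instance (l : Ptn) : Finite l.addableRows := by
  rw [addableRows_eq_insert]
  exact ((l.removableRows_finite.image _).insert 0).to_subtype

lemma ncard_addableRows (l : Ptn) : l.addableRows.ncard = l.removableRows.ncard + 1 := by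
  rw [addableRows_eq_insert, Set.ncard_insert_of_notMem (by simp) (l.removableRows_finite.image _),
    (add_left_injective 1).injOn.ncard_image]

lemma injOn_parts_removableRows (l : Ptn) : Set.InjOn l.parts l.removableRows := by
  intro i hi j hj hij
  simp only [removableRows, Set.mem_ofPred_eq] at hi hj
  by_contra hne
  rcases Nat.lt_or_gt_of_ne hne with h | h
  · have := l.antitone (i + 1) j h
    omega
  · have := l.antitone (j + 1) i h
    omega

lemma exists_mem_removableRows_parts_eq (l : Ptn) {i : ℕ} (hi : l.parts i ≠ 0) :
    ∃ j ∈ l.removableRows, l.parts j = l.parts i := by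
  classical
  obtain ⟨N, hN⟩ := l.finite
  have hex : ∃ j, l.parts (j + 1) < l.parts i := ⟨N, by rw [hN _ (by omega)]; omega⟩
  -- the last row whose part equals `λᵢ`
  set j := Nat.find hex
  have hj : l.parts (j + 1) < l.parts i := Nat.find_spec hex
  have hij : i ≤ j := by
    by_contra h
    have := l.antitone (j + 1) i (by omega)
    omega
  have heq : l.parts j = l.parts i := by
    refine le_antisymm (l.antitone i j hij) ?_
    rcases Nat.eq_zero_or_eq_succ_pred j with h0 | hsucc
    · rw [h0] at hij ⊢
      rw [Nat.le_zero.mp hij]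
    · rw [hsucc]
      exact not_lt.mp (Nat.find_min hex (by omega : j.pred < j))
  exact ⟨j, show l.parts (j + 1) < l.parts j by rwa [heq], heq⟩

lemma image_parts_removableRows (l : Ptn) :
    l.parts '' l.removableRows = {v | v ≠ 0 ∧ ∃ i, l.parts i = v} := by
  ext v
  constructor
  · rintro ⟨i, hi, rfl⟩
    exact ⟨(Nat.zero_le _).trans_lt hi |>.ne', i, rfl⟩
  · rintro ⟨hv, i, rfl⟩
    exact l.exists_mem_removableRows_parts_eq hv

lemma ncard_removableRows (l : Ptn) :
    l.removableRows.ncard = {v | v ≠ 0 ∧ ∃ i, l.parts i = v}.ncard := by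
  rw [← image_parts_removableRows, l.injOn_parts_removableRows.ncard_image]

end Ptn

/-- The number of partitions differing from `λ` by a square is `2ℓ̄(λ) + 1`, where
`ℓ̄(λ)` is the number of distinct nonzero parts of `λ`. -/
theorem statement5 (l : Ptn) :
    {m : Ptn | l.Differs m}.ncard
      = 2 * {v : ℕ | v ≠ 0 ∧ ∃ i : ℕ, l.parts i = v}.ncard + 1 := by
  rw [Ptn.setOf_differs, Set.ncard_union_eq l.disjoint_range_addBox_range_removeBox,
    Set.ncard_range_of_injective l.addBox_injective,
    Set.ncard_range_of_injective l.removeBox_injective, Nat.card_coe_set_eq, Nat.card_coe_set_eq,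
    Ptn.ncard_addableRows, Ptn.ncard_removableRows]
  ring
end

section
/- For any tuple P of osculating paths in an a×b rectangle with boundary point pair (α,β), and any integer d, the number of vacancies of P with content d minus the number of osculations of P with content d equals ρ_d(λ_{a,b,α,β}), the number of cells of content d in the Young diagram of λ_{a,b,α,β}. -/
/-- `mu` has rank `r` and Frobenius coordinates `(g 0,...,g (r-1) | d 0,...,d (r-1))`. -/
def IsFrobenius (mu : Ptn) (r : ℕ) (g d : ℕ → ℕ) : Prop :=
  mu.rank = r ∧ (∀ i : ℕ, i < r → mu.parts i = g i + i + 1) ∧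
    (∀ i : ℕ, i < r → mu.conj i = d i + i + 1)

/-- `lam = λ_{a,b,α,β}`, the `(a,b)`-complement of the partition with Frobenius
notation `(b-β₁,...,b-β_r | a-α₁,...,a-α_r)`. -/
def IsBdryPtn (a b : ℕ) (α β : Finset ℕ) (lam : Ptn) : Prop :=
  ∃ mu : Ptn,
    IsFrobenius mu α.card (fun i => b - (β.sort (· ≤ ·)).getD i 0)
      (fun i => a - (α.sort (· ≤ ·)).getD i 0) ∧
    IsComplementOf a b lam mu
/-- A unit step rightwards `(0,1)` or upwards `(-1,0)` (matrix coordinates). -/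
def IsStep (x y : ℤ × ℤ) : Prop := y = (x.1, x.2 + 1) ∨ y = (x.1 - 1, x.2)

/-- `p` is a path from `s` to `t` taking only steps `(0,1)` or `(-1,0)`. -/
def IsPathFT (p : List (ℤ × ℤ)) (s t : ℤ × ℤ) : Prop :=
  p.head? = some s ∧ p.getLast? = some t ∧ p.Chain' IsStep

/-- Paths `P` (the lower path) and `Q` (the upper path) osculate: at any shared
point the local configuration is fixed, so they neither cross nor share edges. -/
def Osc (P Q : List (ℤ × ℤ)) : Prop :=
  ∀ l l' : ℕ, l < P.length → l' < Q.length →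
    P.getD l (0, 0) = Q.getD l' (0, 0) →
      0 < l ∧ l + 1 < P.length ∧
      P.getD (l - 1) (0, 0) = ((P.getD l (0, 0)).1, (P.getD l (0, 0)).2 - 1) ∧
      P.getD (l + 1) (0, 0) = ((P.getD l (0, 0)).1 - 1, (P.getD l (0, 0)).2) ∧
      (0 < l' → Q.getD (l' - 1) (0, 0) = ((P.getD l (0, 0)).1 + 1, (P.getD l (0, 0)).2)) ∧
      (l' + 1 < Q.length → Q.getD (l' + 1) (0, 0) = ((P.getD l (0, 0)).1, (P.getD l (0, 0)).2 + 1))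

/-- `P` is a tuple of osculating paths in the `a × b` rectangle with boundary pair `(α,β)`:
the `k`-th path runs from `(a, β_k)` to `(α_k, b)` and consecutive paths osculate. -/
def IsOscTuple (a b : ℕ) (α β : Finset ℕ) (P : List (List (ℤ × ℤ))) : Prop :=
  α ⊆ Finset.Icc 1 a ∧ β ⊆ Finset.Icc 1 b ∧ α.card = β.card ∧ P.length = α.card ∧
  (∀ k : ℕ, k < P.length →
    IsPathFT (P.getD k []) ((a : ℤ), (((β.sort (· ≤ ·)).getD k 0 : ℕ) : ℤ))
      ((((α.sort (· ≤ ·)).getD k 0 : ℕ) : ℤ), (b : ℤ))) ∧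
  (∀ k : ℕ, k + 1 < P.length → Osc (P.getD k []) (P.getD (k + 1) []))

/-- The set of lattice points of the `a × b` rectangle. -/
def rectZ (a b : ℕ) : Set (ℤ × ℤ) :=
  {v | 1 ≤ v.1 ∧ v.1 ≤ (a : ℤ) ∧ 1 ≤ v.2 ∧ v.2 ≤ (b : ℤ)}

/-- The number of paths of the tuple `P` passing through the point `v`. -/
noncomputable def passCount (P : List (List (ℤ × ℤ))) (v : ℤ × ℤ) : ℕ :=
  {k : ℕ | k < P.length ∧ v ∈ P.getD k []}.ncard

/-- The vacancy-osculation set of `P`: points through which zero or two paths pass. -/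
def Zset (a b : ℕ) (P : List (List (ℤ × ℤ))) : Set (ℤ × ℤ) :=
  {v ∈ rectZ a b | passCount P v = 0 ∨ passCount P v = 2}


/-!
Fix a content `d`. Each step of a path raises the content by one, so the `k`-th path meets
the diagonal of content `d` at most once, and does so iff `β_k - a ≤ d ≤ b - α_k`. At equal
content the paths are weakly ordered by their index, so a point shared by paths `k < k'` lies on
every path in between; as two consecutive osculations at one point would force the middle path
to leave it both upwards and rightwards, no point lies on three paths. Hence
`#vacancies - #osculations` on the diagonal is `∑ (1 - #paths through v)`, i.e. the number of
rectangle cells of content `d` minus `#{k | β_k - a ≤ d ≤ b - α_k}`.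

On the other side, `λ` is the complement of `μ = (b - β | a - α)` in the `a × b` rectangle, so
after a half turn `ρ_d(λ)` is the number of rectangle cells of content `d` minus `ρ_{b-a-d}(μ)`;
and the `k`-th Frobenius hook of `μ` has one cell of each content from `-(a - α_k)` to `b - β_k`.
-/

open Finset

lemma IsStep.content_eq {x y : ℤ × ℤ} (h : IsStep x y) : y.2 - y.1 = x.2 - x.1 + 1 := by
  rcases h with rfl | rfl <;> simp only <;> ring

lemma IsStep.fst_le {x y : ℤ × ℤ} (h : IsStep x y) : y.1 ≤ x.1 := by
  rcases h with rfl | rfl <;> simp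

lemma IsStep.fst_sub_one_le {x y : ℤ × ℤ} (h : IsStep x y) : x.1 - 1 ≤ y.1 := by
  rcases h with rfl | rfl <;> simp

lemma IsStep.snd_le {x y : ℤ × ℤ} (h : IsStep x y) : x.2 ≤ y.2 := by
  rcases h with rfl | rfl <;> simp

namespace IsPathFT

variable {p : List (ℤ × ℤ)} {s t : ℤ × ℤ}

lemma length_pos (hp : IsPathFT p s t) : 0 < p.length := by
  rcases p with _ | ⟨x, l⟩
  · simp [IsPathFT] at hp
  · simp

lemma getElem_zero (hp : IsPathFT p s t) : p[0]'hp.length_pos = s := by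
  simpa [List.head?_eq_getElem?, List.getElem?_eq_getElem hp.length_pos] using hp.1

lemma getElem_last (hp : IsPathFT p s t) :
    p[p.length - 1]'(by have := hp.length_pos; omega) = t := by
  have h := hp.2.1
  rw [List.getLast?_eq_getElem?, List.getElem?_eq_getElem (by have := hp.length_pos; omega)] at h
  simpa using h

lemma isStep (hp : IsPathFT p s t) {n : ℕ} (h : n + 1 < p.length) : IsStep p[n] p[n + 1] :=
  List.isChain_iff_getElem.mp hp.2.2 n h

lemma content_getElem (hp : IsPathFT p s t) {n : ℕ} (h : n < p.length) :
    p[n].2 - p[n].1 = s.2 - s.1 + n := by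
  induction n with
  | zero => simp [hp.getElem_zero]
  | succ n ih =>
    have := (hp.isStep h).content_eq
    have := ih (by omega)
    push_cast
    omega

lemma length_eq (hp : IsPathFT p s t) : (p.length : ℤ) = (t.2 - t.1) - (s.2 - s.1) + 1 := by
  have := hp.content_getElem (n := p.length - 1) (by have := hp.length_pos; omega)
  rw [hp.getElem_last] at this
  have := hp.length_pos
  omega

lemma getElem_le_getElem (hp : IsPathFT p s t) {m n : ℕ} (hmn : m ≤ n) (hn : n < p.length) :
    p[n].1 ≤ (p[m]'(by omega)).1 ∧ (p[m]'(by omega)).2 ≤ p[n].2 := by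
  induction n, hmn using Nat.le_induction with
  | base => exact ⟨le_rfl, le_rfl⟩
  | succ n hmn ih =>
    have hstep := hp.isStep hn
    have ih := ih (by omega)
    exact ⟨hstep.fst_le.trans ih.1, ih.2.trans hstep.snd_le⟩

lemma bounds_of_mem (hp : IsPathFT p s t) {v : ℤ × ℤ} (hv : v ∈ p) :
    t.1 ≤ v.1 ∧ v.1 ≤ s.1 ∧ s.2 ≤ v.2 ∧ v.2 ≤ t.2 := by
  obtain ⟨n, hn, rfl⟩ := List.mem_iff_getElem.mp hv
  have h₀ := hp.getElem_le_getElem (Nat.zero_le n) hn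
  have h₁ := hp.getElem_le_getElem (Nat.le_sub_one_of_lt hn) (by omega)
  rw [hp.getElem_zero] at h₀
  rw [hp.getElem_last] at h₁
  exact ⟨h₁.1, h₀.1, h₀.2, h₁.2⟩

lemma content_mem_Icc (hp : IsPathFT p s t) {v : ℤ × ℤ} (hv : v ∈ p) :
    s.2 - s.1 ≤ v.2 - v.1 ∧ v.2 - v.1 ≤ t.2 - t.1 := by
  obtain ⟨n, hn, rfl⟩ := List.mem_iff_getElem.mp hv
  have := hp.content_getElem hn
  have := hp.length_eq
  omega

lemma exists_mem_content (hp : IsPathFT p s t) {c : ℤ} (h₁ : s.2 - s.1 ≤ c)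
    (h₂ : c ≤ t.2 - t.1) :
    ∃ v ∈ p, v.2 - v.1 = c := by
  have := hp.length_eq
  refine ⟨p[(c - (s.2 - s.1)).toNat]'(by omega), List.getElem_mem _, ?_⟩
  rw [hp.content_getElem]
  omega

lemma eq_of_mem_of_content_eq (hp : IsPathFT p s t) {v w : ℤ × ℤ} (hv : v ∈ p) (hw : w ∈ p)
    (h : v.2 - v.1 = w.2 - w.1) : v = w := by
  obtain ⟨m, hm, rfl⟩ := List.mem_iff_getElem.mp hv
  obtain ⟨n, hn, rfl⟩ := List.mem_iff_getElem.mp hw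
  have := hp.content_getElem hm
  have := hp.content_getElem hn
  obtain rfl : m = n := by omega
  rfl

end IsPathFT

namespace Osc

variable {p q r : List (ℤ × ℤ)}

lemma not_mem_of_mem_of_mem (hpq : Osc p q) (hqr : Osc q r) {v : ℤ × ℤ} (hp : v ∈ p)
    (hq : v ∈ q) : v ∉ r := by
  intro hr
  obtain ⟨i, hi, hpi⟩ := List.mem_iff_getElem.mp hp
  obtain ⟨l, hl, rfl⟩ := List.mem_iff_getElem.mp hq
  obtain ⟨j, hj, hrj⟩ := List.mem_iff_getElem.mp hr
  have hpq := hpq i l hi hl (by rw [List.getD_eq_getElem _ _ hi, List.getD_eq_getElem _ _ hl, hpi])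
  have hqr := hqr l j hl hj (by rw [List.getD_eq_getElem _ _ hl, List.getD_eq_getElem _ _ hj, hrj])
  -- `q` leaves `v` upwards as the lower path at `v`, but rightwards as the upper one
  have hup := hqr.2.2.2.1
  have hright := hpq.2.2.2.2.2 hqr.2.1
  rw [hright, List.getD_eq_getElem _ _ hi, hpi, List.getD_eq_getElem _ _ hl] at hup
  have := congrArg Prod.fst hup
  simp only at this
  omega

lemma fst_le_of_content_eq (ho : Osc p q) {sp tp sq tq : ℤ × ℤ} (hp : IsPathFT p sp tp)
    (hq : IsPathFT q sq tq) (hs₁ : sp.1 ≤ sq.1) (hs₂ : sp.2 - sp.1 ≤ sq.2 - sq.1)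
    {v w : ℤ × ℤ} (hv : v ∈ p) (hw : w ∈ q) (h : v.2 - v.1 = w.2 - w.1) : v.1 ≤ w.1 := by
  obtain ⟨n, hn, rfl⟩ := List.mem_iff_getElem.mp hw
  clear hw
  induction n generalizing v with
  | zero =>
    have := (hp.bounds_of_mem hv).2.1
    rw [hq.getElem_zero]
    omega
  | succ n ih =>
    obtain ⟨m, hm, rfl⟩ := List.mem_iff_getElem.mp hv
    have hcp := hp.content_getElem hm
    have hcq := hq.content_getElem hn
    obtain ⟨m, rfl⟩ : ∃ m', m = m' + 1 := ⟨m - 1, by push_cast at hcq; omega⟩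
    have hcp' := hp.content_getElem (n := m) (by omega)
    have hcq' := hq.content_getElem (n := n) (by omega)
    have hq_step := (hq.isStep hn).fst_sub_one_le
    push_cast at hcp hcq
    suffices p[m + 1].1 ≤ q[n].1 - 1 by omega
    have ih := ih (List.getElem_mem (by omega : m < p.length)) (by omega) (by omega)
    rcases ih.lt_or_eq with hlt | heq
    · have := (hp.isStep hm).fst_le
      omega
    · have hpt : p[m] = q[n] := Prod.ext heq (by omega)
      have hup := (ho m n (by omega) (by omega)
        (by rw [List.getD_eq_getElem _ _ (by omega), List.getD_eq_getElem _ _ hn.le, hpt])).2.2.2.1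
      rw [List.getD_eq_getElem _ _ hm, List.getD_eq_getElem _ _ (by omega)] at hup
      rw [hup, hpt]

end Osc

lemma Finset.sort_getD_mem {γ : Type*} [LinearOrder γ] {s : Finset γ} {k : ℕ} (hk : k < s.card)
    (d : γ) : (s.sort (· ≤ ·)).getD k d ∈ s := by
  rw [List.getD_eq_getElem _ _ (by simpa using hk)]
  exact (Finset.mem_sort _).mp (List.getElem_mem _)

lemma Finset.sort_getD_le_sort_getD {γ : Type*} [LinearOrder γ] {s : Finset γ} {k k' : ℕ}
    (hkk' : k ≤ k') (hk' : k' < s.card) (d : γ) :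
    (s.sort (· ≤ ·)).getD k d ≤ (s.sort (· ≤ ·)).getD k' d := by
  rw [List.getD_eq_getElem _ _ (by simp; omega), List.getD_eq_getElem _ _ (by simpa using hk')]
  rcases hkk'.eq_or_lt with rfl | hlt
  · exact le_rfl
  · exact List.pairwise_iff_getElem.mp (Finset.pairwise_sort s (· ≤ ·)) k k' _ _ hlt

/-- For `s = α` this is the paper's `α_{k+1}`: indices start at `0`. -/
def sortedNth (s : Finset ℕ) (k : ℕ) : ℕ := (s.sort (· ≤ ·)).getD k 0

/-- The `k < r` for which the path from `(a, β_k)` to `(α_k, b)` meets the content `d`. -/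
noncomputable def crossingIndices (a b : ℕ) (α β : Finset ℕ) (r : ℕ) (d : ℤ) :
    Finset ℕ :=
  {k ∈ range r | (sortedNth β k : ℤ) - a ≤ d ∧ d ≤ b - (sortedNth α k : ℤ)}

lemma passCount_eq_card (P : List (List (ℤ × ℤ))) (v : ℤ × ℤ) :
    passCount P v = #{k ∈ range P.length | v ∈ P.getD k []} := by
  rw [passCount, ← Set.ncard_coe_finset]
  congr 1
  ext k
  simp

namespace IsOscTuple

variable {a b : ℕ} {α β : Finset ℕ} {P : List (List (ℤ × ℤ))}

lemma isPathFT (hP : IsOscTuple a b α β P) {k : ℕ} (hk : k < P.length) :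
    IsPathFT (P.getD k []) (a, sortedNth β k) (sortedNth α k, b) :=
  hP.2.2.2.2.1 k hk

lemma osc (hP : IsOscTuple a b α β P) {k : ℕ} (hk : k + 1 < P.length) :
    Osc (P.getD k []) (P.getD (k + 1) []) :=
  hP.2.2.2.2.2 k hk

lemma sortedNth_alpha_mem (hP : IsOscTuple a b α β P) {k : ℕ} (hk : k < P.length) :
    sortedNth α k ∈ Icc 1 a :=
  hP.1 (Finset.sort_getD_mem (hP.2.2.2.1 ▸ hk) 0)

lemma sortedNth_beta_mem (hP : IsOscTuple a b α β P) {k : ℕ} (hk : k < P.length) :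
    sortedNth β k ∈ Icc 1 b :=
  hP.2.1 (Finset.sort_getD_mem (hP.2.2.1 ▸ hP.2.2.2.1 ▸ hk) 0)

lemma sortedNth_alpha_mono (hP : IsOscTuple a b α β P) {k k' : ℕ} (hkk' : k ≤ k')
    (hk' : k' < P.length) : sortedNth α k ≤ sortedNth α k' :=
  Finset.sort_getD_le_sort_getD hkk' (hP.2.2.2.1 ▸ hk') 0

lemma sortedNth_beta_mono (hP : IsOscTuple a b α β P) {k k' : ℕ} (hkk' : k ≤ k')
    (hk' : k' < P.length) : sortedNth β k ≤ sortedNth β k' :=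
  Finset.sort_getD_le_sort_getD hkk' (hP.2.2.1 ▸ hP.2.2.2.1 ▸ hk') 0

lemma exists_mem_content_eq (hP : IsOscTuple a b α β P) {k k' : ℕ} (hkk' : k ≤ k')
    (hk' : k' < P.length) {w : ℤ × ℤ} (hw : w ∈ P.getD k' []) :
    ∃ u ∈ P.getD k [], u.2 - u.1 = w.2 - w.1 := by
  have hw := (hP.isPathFT hk').content_mem_Icc hw
  have hα := hP.sortedNth_alpha_mono hkk' hk'
  have hβ := hP.sortedNth_beta_mono hkk' hk'
  exact (hP.isPathFT (by omega)).exists_mem_content (by simp only at hw ⊢; omega)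
    (by simp only at hw ⊢; omega)

lemma fst_le_of_content_eq (hP : IsOscTuple a b α β P) {k k' : ℕ} (hkk' : k ≤ k')
    (hk' : k' < P.length) {v w : ℤ × ℤ} (hv : v ∈ P.getD k []) (hw : w ∈ P.getD k' [])
    (h : v.2 - v.1 = w.2 - w.1) : v.1 ≤ w.1 := by
  induction k', hkk' using Nat.le_induction generalizing w with
  | base => exact (congrArg Prod.fst ((hP.isPathFT hk').eq_of_mem_of_content_eq hv hw h)).le
  | succ j hkj ih =>
    obtain ⟨u, hu, hcu⟩ := hP.exists_mem_content_eq (by omega : j ≤ j + 1) hk' hw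
    have hβ := hP.sortedNth_beta_mono (by omega : j ≤ j + 1) hk'
    refine (ih (by omega) hu (h.trans hcu.symm)).trans ?_
    exact (hP.osc hk').fst_le_of_content_eq (hP.isPathFT (by omega)) (hP.isPathFT hk') le_rfl
      (by simp only; omega) hu hw hcu

lemma mem_of_le_of_le (hP : IsOscTuple a b α β P) {k k'' k' : ℕ} (h₁ : k ≤ k'')
    (h₂ : k'' ≤ k') (hk' : k' < P.length) {v : ℤ × ℤ} (hv : v ∈ P.getD k [])
    (hv' : v ∈ P.getD k' []) :
    v ∈ P.getD k'' [] := by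
  obtain ⟨u, hu, hcu⟩ := hP.exists_mem_content_eq h₂ hk' hv'
  have h₁ := hP.fst_le_of_content_eq h₁ (by omega) hv hu hcu.symm
  have h₂ := hP.fst_le_of_content_eq h₂ hk' hu hv' hcu
  obtain rfl : u = v := Prod.ext (by omega) (by omega)
  exact hu

lemma passCount_le_two (hP : IsOscTuple a b α β P) (v : ℤ × ℤ) : passCount P v ≤ 2 := by
  rw [passCount_eq_card]
  set S := {k ∈ range P.length | v ∈ P.getD k []}
  by_contra! hS
  have hne : S.Nonempty := Finset.card_pos.mp (by omega)
  have hmin := Finset.mem_filter.mp (S.min'_mem hne)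
  have hmax := Finset.mem_filter.mp (S.max'_mem hne)
  have hspread : S.min' hne + 2 ≤ S.max' hne := by
    have := Finset.card_le_card (t := Icc (S.min' hne) (S.max' hne)) fun k hk ↦
      Finset.mem_Icc.mpr ⟨S.min'_le k hk, S.le_max' k hk⟩
    rw [Nat.card_Icc] at this
    omega
  have hlen := Finset.mem_range.mp hmax.1
  have mem (j : ℕ) (hj : j ≤ 2) : v ∈ P.getD (S.min' hne + j) [] :=
    hP.mem_of_le_of_le (Nat.le_add_right _ j) (by omega) hlen hmin.2 hmax.2
  exact (hP.osc (by omega)).not_mem_of_mem_of_mem (hP.osc (by omega)) (mem 0 (by omega))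
    (mem 1 (by omega)) (mem 2 le_rfl)

end IsOscTuple

noncomputable def rectDiag (a b : ℕ) (d : ℤ) : Finset (ℤ × ℤ) :=
  {v ∈ Icc 1 (a : ℤ) ×ˢ Icc 1 (b : ℤ) | v.2 - v.1 = d}

lemma mem_rectDiag {a b : ℕ} {d : ℤ} {v : ℤ × ℤ} :
    v ∈ rectDiag a b d ↔ v ∈ rectZ a b ∧ v.2 - v.1 = d := by
  simp [rectDiag, rectZ, and_assoc]

lemma setOf_rectZ_eq (a b : ℕ) (P : List (List (ℤ × ℤ))) (c : ℕ) (d : ℤ) :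
    {v ∈ rectZ a b | passCount P v = c ∧ v.2 - v.1 = d}
      = ↑{v ∈ rectDiag a b d | passCount P v = c} := by
  ext v
  rw [coe_filter]
  change _ ∧ _ ∧ _ ↔ v ∈ rectDiag a b d ∧ _
  rw [mem_rectDiag]
  tauto

lemma card_rectDiag (a b : ℕ) (d : ℤ) :
    #(rectDiag a b d) = #{k ∈ range a | 0 ≤ ((k : ℕ) : ℤ) + d ∧ (k : ℤ) + d < b} := by
  refine card_nbij' (fun v ↦ (v.1 - 1).toNat) (fun k ↦ ((k : ℤ) + 1, k + 1 + d)) ?_ ?_ ?_ ?_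
  · intro v hv
    simp only [mem_coe, mem_filter, mem_rectDiag, rectZ, Set.mem_ofPred_eq, mem_range] at hv ⊢
    omega
  · intro k hk
    simp only [mem_coe, mem_filter, mem_rectDiag, rectZ, Set.mem_ofPred_eq, mem_range] at hk ⊢
    omega
  · intro v hv
    simp only [mem_coe, mem_rectDiag, rectZ, Set.mem_ofPred_eq] at hv
    ext <;> simp only <;> omega
  · intro k _
    simp

lemma IsPathFT.card_filter_mem_rectDiag {p : List (ℤ × ℤ)} {s t : ℤ × ℤ}
    (hp : IsPathFT p s t) {a b : ℕ} (ht : 1 ≤ t.1) (hs : s.1 ≤ a) (hs' : 1 ≤ s.2)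
    (ht' : t.2 ≤ b) (d : ℤ) :
    #{v ∈ rectDiag a b d | v ∈ p} = if s.2 - s.1 ≤ d ∧ d ≤ t.2 - t.1 then 1 else 0 := by
  split_ifs with hd
  · obtain ⟨u, hu, hcu⟩ := hp.exists_mem_content hd.1 hd.2
    rw [Finset.card_eq_one]
    refine ⟨u, Finset.eq_singleton_iff_unique_mem.mpr ⟨?_, ?_⟩⟩
    · have := hp.bounds_of_mem hu
      simp only [mem_filter, mem_rectDiag, rectZ, Set.mem_ofPred_eq]
      exact ⟨⟨by omega, hcu⟩, hu⟩
    · intro v hv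
      rw [mem_filter, mem_rectDiag] at hv
      exact hp.eq_of_mem_of_content_eq hv.2 hu (hv.1.2.trans hcu.symm)
  · rw [Finset.card_eq_zero, Finset.filter_eq_empty_iff]
    intro v hv hvp
    have := hp.content_mem_Icc hvp
    have := (mem_rectDiag.mp hv).2
    omega

namespace IsOscTuple

variable {a b : ℕ} {α β : Finset ℕ} {P : List (List (ℤ × ℤ))}

lemma sum_passCount_rectDiag (hP : IsOscTuple a b α β P) (d : ℤ) :
    ∑ v ∈ rectDiag a b d, passCount P v = #(crossingIndices a b α β P.length d) := by
  simp_rw [crossingIndices, passCount_eq_card, card_filter]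
  rw [Finset.sum_comm]
  refine Finset.sum_congr rfl fun k hk ↦ ?_
  have hk := Finset.mem_range.mp hk
  have hα := Finset.mem_Icc.mp (hP.sortedNth_alpha_mem hk)
  have hβ := Finset.mem_Icc.mp (hP.sortedNth_beta_mem hk)
  rw [← card_filter, (hP.isPathFT hk).card_filter_mem_rectDiag (by simp; omega) le_rfl
    (by simp; omega) le_rfl]

lemma card_vacancies_sub_card_osculations (hP : IsOscTuple a b α β P) (d : ℤ) :
    (#{v ∈ rectDiag a b d | passCount P v = 0} : ℤ)
        - #{v ∈ rectDiag a b d | passCount P v = 2}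
      = #(rectDiag a b d) - #(crossingIndices a b α β P.length d) := by
  have hpoint (v : ℤ × ℤ) : ((if passCount P v = 0 then 1 else 0) -
      (if passCount P v = 2 then 1 else 0) : ℤ) = 1 - passCount P v := by
    have := hP.passCount_le_two v
    interval_cases passCount P v <;> simp
  rw [← sum_boole, ← sum_boole, ← sum_sub_distrib, sum_congr rfl fun v _ ↦ hpoint v,
    sum_sub_distrib, ← hP.sum_passCount_rectDiag, Nat.cast_sum]
  simp

end IsOscTuple

lemma Nat.mem_iff_lt_ncard_of_isLowerSet {S : Set ℕ} (hS : IsLowerSet S) (hf : S.Finite)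
    (i : ℕ) : i ∈ S ↔ i < S.ncard := by
  obtain h | ⟨n, rfl⟩ := hS.eq_univ_or_Iio
  · exact absurd (h ▸ hf) Set.infinite_univ
  · simp

namespace Ptn

variable (l : Ptn)

lemma finite_of_parts_ne_zero {S : Set ℕ} (h : ∀ i ∈ S, l.parts i ≠ 0) : S.Finite := by
  obtain ⟨N, hN⟩ := l.finite
  exact (Set.finite_Iio N).subset fun i hi ↦ Set.mem_Iio.mpr <| by
    by_contra! hi'
    exact h i hi (hN i hi')

lemma lt_parts_iff_lt_conj (i j : ℕ) : j < l.parts i ↔ i < l.conj j :=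
  Nat.mem_iff_lt_ncard_of_isLowerSet (fun _ _ hnm hm ↦ lt_of_lt_of_le hm (l.antitone _ _ hnm))
    (l.finite_of_parts_ne_zero fun _ hi ↦ Nat.ne_zero_of_lt hi) i

lemma lt_parts_self_iff_lt_rank (k : ℕ) : k < l.parts k ↔ k < l.rank :=
  Nat.mem_iff_lt_ncard_of_isLowerSet
    (fun _ _ hnm hm ↦ lt_of_le_of_lt hnm (lt_of_lt_of_le hm (l.antitone _ _ hnm)))
    (l.finite_of_parts_ne_zero fun _ hi ↦ Nat.ne_zero_of_lt hi) k

lemma lt_conj_self_iff_lt_rank (k : ℕ) : k < l.conj k ↔ k < l.rank := by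
  rw [← lt_parts_iff_lt_conj, lt_parts_self_iff_lt_rank]

/-- Row `k` (counting from `0`) contains the cell of content `d` iff `0 ≤ k + d < λ_k`. -/
lemma rho_eq_card_rows {N : ℕ} (hN : ∀ n, N ≤ n → l.parts n = 0) (d : ℤ) :
    l.rho d = #{k ∈ range N | 0 ≤ ((k : ℕ) : ℤ) + d ∧ (k : ℤ) + d < l.parts k} := by
  have hcells : {p ∈ l.ycells | (p.2 : ℤ) - p.1 = d}
      = ↑({k ∈ range N | 0 ≤ ((k : ℕ) : ℤ) + d ∧ (k : ℤ) + d < l.parts k}.image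
          fun k : ℕ ↦ (k + 1, ((k : ℤ) + 1 + d).toNat)) := by
    ext ⟨i, j⟩
    simp only [ycells, Set.mem_ofPred_eq, coe_image, coe_filter, Set.mem_image, mem_range,
      Prod.mk.injEq]
    constructor
    · rintro ⟨⟨hi, hj, hji⟩, hd⟩
      have hiN : i - 1 < N := by
        by_contra! h
        have := hN _ h
        omega
      exact ⟨i - 1, ⟨hiN, by omega, by omega⟩, by omega, by omega⟩
    · rintro ⟨k, ⟨-, h₀, hlt⟩, rfl, rfl⟩
      simp only [add_tsub_cancel_right]
      omega
  rw [rho, hcells, Set.ncard_coe_finset, card_image_of_injective]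
  intro x y h
  simpa using congrArg Prod.fst h

/-- The Frobenius hook `k` contributes one cell of every content in `(k - λ'_k, λ_k - k)`. -/
lemma rho_eq_card_hooks (e : ℤ) :
    l.rho e
      = #{k ∈ range l.rank | ((k : ℕ) : ℤ) - l.conj k < e ∧ e < (l.parts k : ℤ) - k} := by
  obtain ⟨N, hN⟩ := l.finite
  have hN' (m : ℕ) (hm : 0 < l.parts m) : m < N := by
    by_contra! h
    have := hN m h
    omega
  rw [l.rho_eq_card_rows hN]
  rcases le_or_gt 0 e with he | he
  · refine congrArg card (Finset.ext fun m ↦ ?_)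
    have := l.lt_parts_self_iff_lt_rank m
    have := l.lt_conj_self_iff_lt_rank m
    have := hN' m
    simp only [mem_filter, mem_range]
    omega
  · obtain ⟨n, rfl⟩ : ∃ n : ℕ, e = -n := ⟨(-e).toNat, by omega⟩
    refine card_nbij' (· - n) (· + n) (fun m hm ↦ ?_) (fun k hk ↦ ?_) (fun m hm ↦ ?_)
      (fun k _ ↦ by simp)
    · simp only [coe_filter, mem_range, Set.mem_ofPred_eq] at hm ⊢
      have := l.lt_parts_iff_lt_conj m (m - n)
      have := l.lt_parts_self_iff_lt_rank (m - n)
      have := l.lt_conj_self_iff_lt_rank (m - n)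
      omega
    · simp only [coe_filter, mem_range, Set.mem_ofPred_eq] at hk ⊢
      have := l.lt_parts_iff_lt_conj (k + n) k
      have := l.lt_parts_self_iff_lt_rank k
      have := hN' (k + n)
      omega
    · simp only [coe_filter, mem_range, Set.mem_ofPred_eq] at hm
      simp only
      omega

end Ptn

/-- The cells of `[a] × [b]` of content `d` outside `λ` are, rotated by a half turn, the cells of
`μ` of content `b - a - d`. -/
lemma IsComplementOf.rho_add_rho {a b : ℕ} {lam mu : Ptn} (hc : IsComplementOf a b lam mu)
    (hb : ∀ m, mu.parts m ≤ b) (ha : ∀ m, a ≤ m → mu.parts m = 0) (d : ℤ) :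
    lam.rho d + mu.rho (b - a - d) = #(rectDiag a b d) := by
  have hlam (k : ℕ) (hk : a ≤ k) : lam.parts k = 0 := by rw [hc k, if_neg (by omega)]
  rw [card_rectDiag, lam.rho_eq_card_rows hlam, mu.rho_eq_card_rows ha,
    ← card_filter_add_card_filter_not (p := fun k : ℕ ↦ (k : ℤ) + d < lam.parts k)
      (s := {k ∈ range a | 0 ≤ ((k : ℕ) : ℤ) + d ∧ (k : ℤ) + d < b}), filter_filter]
  congr 1
  · refine congrArg card (filter_congr fun k hk ↦ ?_)
    have hk := mem_range.mp hk
    have hck := hc k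
    rw [if_pos hk] at hck
    have := hb (a - 1 - k)
    omega
  · refine card_nbij' (a - 1 - ·) (a - 1 - ·) (fun m hm ↦ ?_) (fun k hk ↦ ?_)
      (fun m hm ↦ ?_) (fun k hk ↦ ?_)
    · simp only [coe_filter, mem_filter, mem_range, Set.mem_ofPred_eq] at hm ⊢
      have hcm := hc (a - 1 - m)
      rw [if_pos (by omega), show a - 1 - (a - 1 - m) = m by omega] at hcm
      have := hb m
      omega
    · simp only [coe_filter, mem_filter, mem_range, Set.mem_ofPred_eq] at hk ⊢
      have hck := hc k
      rw [if_pos hk.1.1] at hck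
      have := hb (a - 1 - k)
      omega
    · simp only [coe_filter, mem_range, Set.mem_ofPred_eq] at hm
      simp only
      omega
    · simp only [coe_filter, mem_filter, mem_range, Set.mem_ofPred_eq] at hk
      simp only
      omega

namespace IsFrobenius

variable {mu : Ptn} {r : ℕ} {arm leg : ℕ → ℕ}

lemma rho_eq (hf : IsFrobenius mu r arm leg) (e : ℤ) :
    mu.rho e = #{k ∈ range r | -(leg k : ℤ) ≤ e ∧ e ≤ arm k} := by
  rw [mu.rho_eq_card_hooks, hf.1]
  refine congrArg card (filter_congr fun k hk ↦ ?_)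
  rw [hf.2.1 k (mem_range.mp hk), hf.2.2 k (mem_range.mp hk)]
  push_cast
  omega

lemma parts_le (hf : IsFrobenius mu r arm leg) {b : ℕ} (harm : ∀ k < r, arm k < b) (m : ℕ) :
    mu.parts m ≤ b := by
  refine (mu.antitone 0 m m.zero_le).trans ?_
  rcases Nat.eq_zero_or_pos r with rfl | hr
  · have := mu.lt_parts_self_iff_lt_rank 0
    rw [hf.1] at this
    omega
  · have := harm 0 hr
    rw [hf.2.1 0 hr]
    omega

lemma parts_eq_zero (hf : IsFrobenius mu r arm leg) {a : ℕ} (hleg : ∀ k < r, leg k < a)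
    {m : ℕ} (hm : a ≤ m) : mu.parts m = 0 := by
  have hconj : mu.conj 0 ≤ a := by
    rcases Nat.eq_zero_or_pos r with rfl | hr
    · have := mu.lt_conj_self_iff_lt_rank 0
      rw [hf.1] at this
      omega
    · have := hleg 0 hr
      rw [hf.2.2 0 hr]
      omega
  have := mu.lt_parts_iff_lt_conj m 0
  omega

end IsFrobenius

lemma IsBdryPtn.rho_eq {a b : ℕ} {α β : Finset ℕ} {lam : Ptn} (hlam : IsBdryPtn a b α β lam)
    (hα : α ⊆ Icc 1 a) (hβ : β ⊆ Icc 1 b) (hcard : α.card = β.card) (d : ℤ) :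
    (lam.rho d : ℤ) = #(rectDiag a b d) - #(crossingIndices a b α β α.card d) := by
  obtain ⟨mu, hf, hc⟩ := hlam
  have hαk (k : ℕ) (hk : k < α.card) : sortedNth α k ∈ Icc 1 a :=
    hα (Finset.sort_getD_mem hk 0)
  have hβk (k : ℕ) (hk : k < α.card) : sortedNth β k ∈ Icc 1 b :=
    hβ (Finset.sort_getD_mem (hcard ▸ hk) 0)
  have hmu_le : ∀ m, mu.parts m ≤ b := hf.parts_le fun k hk ↦ show b - sortedNth β k < b by
    have := mem_Icc.mp (hβk k hk)
    omega
  have hmu_eq_zero (m : ℕ) (hm : a ≤ m) : mu.parts m = 0 :=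
    hf.parts_eq_zero (fun k hk ↦ show a - sortedNth α k < a by
      have := mem_Icc.mp (hαk k hk)
      omega) hm
  have hsum := hc.rho_add_rho hmu_le hmu_eq_zero d
  rw [hf.rho_eq] at hsum
  rw [← hsum, Nat.cast_add, add_sub_assoc, left_eq_add, sub_eq_zero, Nat.cast_inj,
    crossingIndices]
  refine congrArg card (filter_congr fun k hk ↦ ?_)
  have := mem_Icc.mp (hαk k (mem_range.mp hk))
  have := mem_Icc.mp (hβk k (mem_range.mp hk))
  simp only [sortedNth] at *
  omega

theorem statement12_general (a b : ℕ) (α β : Finset ℕ)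
    (P : List (List (ℤ × ℤ))) (hP : IsOscTuple a b α β P)
    (lam : Ptn) (hlam : IsBdryPtn a b α β lam) (d : ℤ) :
    ({v ∈ rectZ a b | passCount P v = 0 ∧ v.2 - v.1 = d}.ncard : ℤ)
        - ({v ∈ rectZ a b | passCount P v = 2 ∧ v.2 - v.1 = d}.ncard : ℤ)
      = (lam.rho d : ℤ) := by
  rw [setOf_rectZ_eq, setOf_rectZ_eq, Set.ncard_coe_finset, Set.ncard_coe_finset,
    hP.card_vacancies_sub_card_osculations]
  obtain ⟨hα, hβ, hcard, hlen, -⟩ := hP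
  rw [hlen, hlam.rho_eq hα hβ hcard]

/-- For any osculating path tuple `P` with boundary pair `(α,β)` and any content `d`,
(number of vacancies of content `d`) - (number of osculations of content `d`)
equals `ρ_d(λ_{a,b,α,β})`. -/
theorem statement12 (a b : ℕ) (ha : 0 < a) (hb : 0 < b) (α β : Finset ℕ)
    (P : List (List (ℤ × ℤ))) (hP : IsOscTuple a b α β P)
    (lam : Ptn) (hlam : IsBdryPtn a b α β lam) (d : ℤ) :
    ({v ∈ rectZ a b | passCount P v = 0 ∧ v.2 - v.1 = d}.ncard : ℤ)
        - ({v ∈ rectZ a b | passCount P v = 2 ∧ v.2 - v.1 = d}.ncard : ℤ)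
      = (lam.rho d : ℤ) :=
  statement12_general a b α β P hP lam hlam d
end

section
/- The number of oscillating tableaux of shape λ and length l, when (l − |λ|)/2 is a nonnegative integer, equals C(l, |λ|) · (l − |λ| − 1)!! · f^λ, where f^λ is the number of standard Young tableaux of shape λ and n!! = n(n−2)(n−4)···3·1 with (−1)!! = 1. -/
/-- The empty partition. -/
def emptyPtn : Ptn := ⟨fun _ => 0, fun _ _ _ => le_rfl, ⟨0, fun _ _ => rfl⟩⟩

/-- `e` is an oscillating tableau of shape `lam` and length `l`: a sequence of `l+1`
partitions from `∅` to `lam` in which consecutive partitions differ by a square. -/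
def IsOT (lam : Ptn) (l : ℕ) (e : List Ptn) : Prop :=
  e.length = l + 1 ∧ e.head? = some emptyPtn ∧ e.getLast? = some lam ∧
    e.Chain' Ptn.Differs

/-- The number of deletions of the oscillating tableau `e` of length `l`. -/
noncomputable def numDel (e : List Ptn) (l : ℕ) : ℕ :=
  {k : ℕ | 1 ≤ k ∧ k ≤ l ∧ (e.getD k emptyPtn).size + 1 = (e.getD (k - 1) emptyPtn).size}.ncard

/-- `σ` is a standard Young tableau of shape `lam` (entries `1,...,|λ|`,
strictly increasing along rows and columns, `0` outside the diagram). -/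
def IsSYT (lam : Ptn) (σ : ℕ × ℕ → ℕ) : Prop :=
  (∀ p : ℕ × ℕ, p ∉ lam.ycells → σ p = 0) ∧
  Set.BijOn σ lam.ycells (Set.Icc 1 lam.size) ∧
  (∀ p ∈ lam.ycells, ∀ q ∈ lam.ycells, p.1 = q.1 → p.2 < q.2 → σ p < σ q) ∧
  (∀ p ∈ lam.ycells, ∀ q ∈ lam.ycells, p.2 = q.2 → p.1 < q.1 → σ p < σ q)

/-!
Appending a step to an oscillating tableau of length `l` that ends at `μ` gives one of length
`l + 1` ending at a partition that differs from `μ` by one cell, so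
`|OT(λ, l + 1)| = ∑_{μ ⋖ λ} |OT(μ, l)| + ∑_{λ ⋖ μ} |OT(μ, l)|`.
Removing the largest entry of a standard Young tableau gives `f^λ = ∑_{μ ⋖ λ} f^μ`. In Young's
lattice two distinct partitions have as many common upper covers as common lower covers (at most
one), and `λ` has one more upper cover than lower covers; this is `DU - UD = I`, and with the
previous recursion it yields `∑_{λ ⋖ μ} f^μ = (|λ| + 1) f^λ` by induction on `|λ|`.
Hence `|OT(λ, l)| / f^λ` satisfies a recursion in `l` that, by Pascal's rule, is also satisfied
by `C(l, |λ|) (l - |λ| - 1)!!` (set to zero when `l - |λ|` is odd).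
-/

namespace Ptn

open Finset

@[ext]
theorem ext {l m : Ptn} (h : ∀ i, l.parts i = m.parts i) : l = m := by
  cases l; cases m; simp only [mk.injEq]; exact funext h

theorem mem_ycells {l : Ptn} {p : ℕ × ℕ} :
    p ∈ l.ycells ↔ 1 ≤ p.1 ∧ 1 ≤ p.2 ∧ p.2 ≤ l.parts (p.1 - 1) := Iff.rfl

theorem ycells_finite (l : Ptn) : l.ycells.Finite := by
  obtain ⟨N, hN⟩ := l.finite
  refine ((Set.finite_Icc 1 N).prod (Set.finite_Icc 1 (l.parts 0))).subset ?_
  rintro ⟨r, c⟩ ⟨hr, hc, hcr⟩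
  dsimp only at hr hc hcr
  have := l.antitone 0 (r - 1) (Nat.zero_le _)
  have := hN (r - 1)
  exact ⟨⟨hr, by omega⟩, hc, by omega⟩

theorem parts_le_size (l : Ptn) (i : ℕ) : l.parts i ≤ l.size := by
  have hsub : (fun c => (i + 1, c)) '' Set.Icc 1 (l.parts i) ⊆ l.ycells := by
    rintro _ ⟨c, ⟨hc1, hc2⟩, rfl⟩
    simp only [mem_ycells, Nat.add_sub_cancel]
    omega
  have := Set.ncard_le_ncard hsub l.ycells_finite
  rwa [Set.ncard_image_of_injective _ fun a b h => (Prod.mk.inj h).2, Set.ncard_Icc_nat,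
    Nat.add_sub_cancel] at this

theorem parts_eq_zero_of_size_le {l : Ptn} {i : ℕ} (h : l.size ≤ i) : l.parts i = 0 := by
  by_contra hi
  have hsub : (fun r => (r + 1, 1)) '' Set.Icc 0 i ⊆ l.ycells := by
    rintro _ ⟨r, ⟨-, hr⟩, rfl⟩
    have := l.antitone r i hr
    simp only [mem_ycells, Nat.add_sub_cancel]
    omega
  have := Set.ncard_le_ncard hsub l.ycells_finite
  rw [Set.ncard_image_of_injective _ fun a b h => by simpa using h, Set.ncard_Icc_nat] at this
  rw [size] at h
  omega

theorem ycells_emptyPtn : emptyPtn.ycells = ∅ :=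
  Set.eq_empty_of_forall_notMem fun _ ⟨_, hc, hcr⟩ => Nat.not_succ_le_zero 0 (hc.trans hcr)

theorem size_emptyPtn : emptyPtn.size = 0 := by
  rw [size, ycells_emptyPtn, Set.ncard_empty]

theorem size_eq_zero_iff {l : Ptn} : l.size = 0 ↔ l = emptyPtn :=
  ⟨fun h => Ptn.ext fun _ => parts_eq_zero_of_size_le (by omega), fun h => h ▸ size_emptyPtn⟩

theorem finite_setOf_size_le (n : ℕ) : {l : Ptn | l.size ≤ n}.Finite := by
  rw [← Set.finite_coe_iff]
  refine Finite.of_injective (β := Fin n → Fin (n + 1)) (fun l i =>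
    ⟨l.1.parts i, Nat.lt_succ_of_le ((l.1.parts_le_size i).trans l.2)⟩) ?_
  rintro ⟨l, hl⟩ ⟨m, hm⟩ h
  refine Subtype.ext (Ptn.ext fun i => ?_)
  by_cases hi : i < n
  · exact congrArg Fin.val (congrFun h ⟨i, hi⟩)
  · simp only [Set.mem_ofPred_eq] at hl hm
    rw [parts_eq_zero_of_size_le (l := l) (by omega), parts_eq_zero_of_size_le (l := m) (by omega)]

noncomputable instance : DecidableEq Ptn := Classical.decEq Ptn

def CovByAt (mu lam : Ptn) (i : ℕ) : Prop :=
  lam.parts i = mu.parts i + 1 ∧ ∀ k, k ≠ i → lam.parts k = mu.parts k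

def CovBy (mu lam : Ptn) : Prop := ∃ i, mu.CovByAt lam i

theorem covByAt_iff {mu lam : Ptn} {i : ℕ} :
    mu.CovByAt lam i ↔ ∀ k, lam.parts k = mu.parts k + if k = i then 1 else 0 := by
  refine ⟨fun h k => ?_, fun h => ⟨by simpa using h i, fun k hk => by simpa [hk] using h k⟩⟩
  split_ifs with hk
  · exact hk ▸ h.1
  · exact h.2 k hk

theorem differs_iff {l m : Ptn} : l.Differs m ↔ m.CovBy l ∨ l.CovBy m := by
  constructor
  · rintro ⟨i, h | h, hk⟩
    · exact Or.inl ⟨i, h, hk⟩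
    · exact Or.inr ⟨i, h, fun k hki => (hk k hki).symm⟩
  · rintro (⟨i, h, hk⟩ | ⟨i, h, hk⟩)
    · exact ⟨i, Or.inl h, hk⟩
    · exact ⟨i, Or.inr h, fun k hki => (hk k hki).symm⟩

theorem CovByAt.unique_left {mu nu lam : Ptn} {i : ℕ} (hmu : mu.CovByAt lam i)
    (hnu : nu.CovByAt lam i) : mu = nu :=
  Ptn.ext fun k => by
    have := covByAt_iff.1 hmu k
    have := covByAt_iff.1 hnu k
    omega

theorem CovByAt.unique_right {lam mu nu : Ptn} {i : ℕ} (hmu : lam.CovByAt mu i)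
    (hnu : lam.CovByAt nu i) : mu = nu :=
  Ptn.ext fun k => by
    have := covByAt_iff.1 hmu k
    have := covByAt_iff.1 hnu k
    omega

theorem CovByAt.ycells_eq {mu lam : Ptn} {i : ℕ} (h : mu.CovByAt lam i) :
    lam.ycells = insert (i + 1, lam.parts i) mu.ycells := by
  ext ⟨r, c⟩
  simp only [Set.mem_insert_iff, mem_ycells, Prod.mk.injEq]
  rcases eq_or_ne (r - 1) i with hr | hr
  · rw [hr]
    have := h.1
    omega
  · have := h.2 _ hr
    omega

theorem CovByAt.cell_notMem {mu lam : Ptn} {i : ℕ} (h : mu.CovByAt lam i) :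
    (i + 1, lam.parts i) ∉ mu.ycells := by
  simp only [mem_ycells, Nat.add_sub_cancel]
  have := h.1
  omega

theorem CovByAt.size_eq {mu lam : Ptn} {i : ℕ} (h : mu.CovByAt lam i) :
    lam.size = mu.size + 1 := by
  rw [size, h.ycells_eq, Set.ncard_insert_of_notMem h.cell_notMem mu.ycells_finite, size]

theorem CovBy.size_eq {mu lam : Ptn} (h : mu.CovBy lam) : lam.size = mu.size + 1 :=
  h.choose_spec.size_eq

/-- The row in which `lam` exceeds `mu`; meaningful when `mu.CovBy lam`. -/
noncomputable def coverRow (mu lam : Ptn) : ℕ := sInf {k | mu.parts k ≠ lam.parts k}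

noncomputable def coverCell (mu lam : Ptn) : ℕ × ℕ :=
  (coverRow mu lam + 1, lam.parts (coverRow mu lam))

theorem CovByAt.coverRow_eq {mu lam : Ptn} {i : ℕ} (h : mu.CovByAt lam i) :
    coverRow mu lam = i := by
  have : {k | mu.parts k ≠ lam.parts k} = {i} := by
    ext k
    have := covByAt_iff.1 h k
    simp only [Set.mem_ofPred_eq, Set.mem_singleton_iff]
    split_ifs at this <;> omega
  rw [coverRow, this, csInf_singleton]

theorem CovBy.covByAt_coverRow {mu lam : Ptn} (h : mu.CovBy lam) :
    mu.CovByAt lam (coverRow mu lam) := by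
  obtain ⟨i, hi⟩ := h
  rwa [hi.coverRow_eq]

theorem CovBy.ycells_eq {mu lam : Ptn} (h : mu.CovBy lam) :
    lam.ycells = insert (coverCell mu lam) mu.ycells :=
  h.covByAt_coverRow.ycells_eq

theorem CovBy.coverCell_notMem {mu lam : Ptn} (h : mu.CovBy lam) :
    coverCell mu lam ∉ mu.ycells :=
  h.covByAt_coverRow.cell_notMem

theorem CovBy.coverCell_injective {mu nu lam : Ptn} (hmu : mu.CovBy lam) (hnu : nu.CovBy lam)
    (h : coverCell mu lam = coverCell nu lam) : mu = nu := by
  have hrow : coverRow mu lam = coverRow nu lam := by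
    simpa [coverCell] using congrArg Prod.fst h
  exact hmu.covByAt_coverRow.unique_left (hrow ▸ hnu.covByAt_coverRow)

noncomputable def lowerCovers (lam : Ptn) : Finset Ptn :=
  ((finite_setOf_size_le lam.size).subset fun mu (h : mu.CovBy lam) => by
    simp only [Set.mem_ofPred_eq, h.size_eq]; omega).toFinset

noncomputable def upperCovers (lam : Ptn) : Finset Ptn :=
  ((finite_setOf_size_le (lam.size + 1)).subset fun mu (h : lam.CovBy mu) => by
    simp only [Set.mem_ofPred_eq, h.size_eq]; omega).toFinset

@[simp]
theorem mem_lowerCovers {mu lam : Ptn} : mu ∈ lowerCovers lam ↔ mu.CovBy lam :=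
  Set.Finite.mem_toFinset _

@[simp]
theorem mem_upperCovers {mu lam : Ptn} : mu ∈ upperCovers lam ↔ lam.CovBy mu :=
  Set.Finite.mem_toFinset _

theorem lowerCovers_eq_empty {lam : Ptn} (h : lam.size = 0) : lowerCovers lam = ∅ :=
  Finset.eq_empty_of_forall_notMem fun mu hmu => by
    have := (mem_lowerCovers.1 hmu).size_eq
    omega

instance : Max Ptn where
  max l m :=
    { parts := l.parts ⊔ m.parts
      antitone := fun _ _ h => sup_le_sup (l.antitone _ _ h) (m.antitone _ _ h)
      finite := by
        obtain ⟨N, hN⟩ := l.finite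
        obtain ⟨M, hM⟩ := m.finite
        exact ⟨max N M, fun n hn => by simp [hN n (by omega), hM n (by omega)]⟩ }

instance : Min Ptn where
  min l m :=
    { parts := l.parts ⊓ m.parts
      antitone := fun _ _ h => inf_le_inf (l.antitone _ _ h) (m.antitone _ _ h)
      finite := by
        obtain ⟨N, hN⟩ := l.finite
        exact ⟨N, fun n hn => by simp [hN n hn]⟩ }

@[simp]
theorem sup_parts (l m : Ptn) (k : ℕ) : (l ⊔ m).parts k = max (l.parts k) (m.parts k) := rfl

@[simp]
theorem inf_parts (l m : Ptn) (k : ℕ) : (l ⊓ m).parts k = min (l.parts k) (m.parts k) := rfl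

theorem CovByAt.row_ne_left {l m mu : Ptn} {a b : ℕ} (ha : l.CovByAt mu a) (hb : m.CovByAt mu b)
    (hne : l ≠ m) : a ≠ b := by
  rintro rfl
  exact hne (ha.unique_left hb)

theorem CovByAt.row_ne_right {kap l m : Ptn} {a b : ℕ} (ha : kap.CovByAt l a)
    (hb : kap.CovByAt m b) (hne : l ≠ m) : a ≠ b := by
  rintro rfl
  exact hne (ha.unique_right hb)

theorem CovByAt.inf_covByAt {l m mu : Ptn} {a b : ℕ} (ha : l.CovByAt mu a)
    (hb : m.CovByAt mu b) (hne : l ≠ m) : (l ⊓ m).CovByAt l b ∧ (l ⊓ m).CovByAt m a := by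
  have hab := ha.row_ne_left hb hne
  simp only [covByAt_iff, inf_parts] at ha hb ⊢
  refine ⟨fun k => ?_, fun k => ?_⟩ <;>
  · have := ha k; have := hb k; have := ha b; have := hb a
    split_ifs at * <;> omega

theorem CovByAt.sup_covByAt {kap l m : Ptn} {a b : ℕ} (ha : kap.CovByAt l a)
    (hb : kap.CovByAt m b) (hne : l ≠ m) : l.CovByAt (l ⊔ m) b ∧ m.CovByAt (l ⊔ m) a := by
  have hab := ha.row_ne_right hb hne
  simp only [covByAt_iff, sup_parts] at ha hb ⊢
  refine ⟨fun k => ?_, fun k => ?_⟩ <;>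
  · have := ha k; have := hb k; have := ha b; have := hb a
    split_ifs at * <;> omega

theorem CovByAt.eq_sup {l m mu : Ptn} {a b : ℕ} (ha : l.CovByAt mu a)
    (hb : m.CovByAt mu b) (hne : l ≠ m) : mu = l ⊔ m := by
  have hab := ha.row_ne_left hb hne
  refine Ptn.ext fun k => ?_
  have := covByAt_iff.1 ha k; have := covByAt_iff.1 hb k
  rw [sup_parts]
  split_ifs at * <;> omega

theorem CovByAt.eq_inf {kap l m : Ptn} {a b : ℕ} (ha : kap.CovByAt l a)
    (hb : kap.CovByAt m b) (hne : l ≠ m) : kap = l ⊓ m := by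
  have hab := ha.row_ne_right hb hne
  refine Ptn.ext fun k => ?_
  have := covByAt_iff.1 ha k; have := covByAt_iff.1 hb k
  rw [inf_parts]
  split_ifs at * <;> omega

theorem card_upperCovers_inter {l m : Ptn} (hne : l ≠ m) :
    #(upperCovers l ∩ upperCovers m) = #(lowerCovers l ∩ lowerCovers m) := by
  have hU : upperCovers l ∩ upperCovers m ⊆ {l ⊔ m} := fun mu hmu => by
    simp only [Finset.mem_inter, mem_upperCovers] at hmu
    obtain ⟨⟨a, ha⟩, ⟨b, hb⟩⟩ := hmu
    exact Finset.mem_singleton.2 (ha.eq_sup hb hne)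
  have hD : lowerCovers l ∩ lowerCovers m ⊆ {l ⊓ m} := fun kap hkap => by
    simp only [Finset.mem_inter, mem_lowerCovers] at hkap
    obtain ⟨⟨a, ha⟩, ⟨b, hb⟩⟩ := hkap
    exact Finset.mem_singleton.2 (ha.eq_inf hb hne)
  have hiff : (upperCovers l ∩ upperCovers m).Nonempty ↔
      (lowerCovers l ∩ lowerCovers m).Nonempty := by
    simp only [Finset.Nonempty, Finset.mem_inter, mem_upperCovers, mem_lowerCovers]
    constructor
    · rintro ⟨mu, ⟨a, ha⟩, ⟨b, hb⟩⟩
      exact ⟨l ⊓ m, ⟨b, (ha.inf_covByAt hb hne).1⟩, ⟨a, (ha.inf_covByAt hb hne).2⟩⟩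
    · rintro ⟨kap, ⟨a, ha⟩, ⟨b, hb⟩⟩
      exact ⟨l ⊔ m, ⟨b, (ha.sup_covByAt hb hne).1⟩, ⟨a, (ha.sup_covByAt hb hne).2⟩⟩
  have := Finset.card_le_card hU
  have := Finset.card_le_card hD
  rw [← Finset.card_pos, ← Finset.card_pos] at hiff
  simp only [Finset.card_singleton] at *
  omega

def setRow (l : Ptn) (i v : ℕ) (hlo : l.parts (i + 1) ≤ v) (hhi : ∀ j < i, v ≤ l.parts j) :
    Ptn where
  parts := Function.update l.parts i v
  antitone m n hmn := by
    have := l.antitone m n hmn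
    have := l.antitone (i + 1) n
    have := hhi m
    simp only [Function.update_apply]
    split_ifs <;> omega
  finite := by
    obtain ⟨N, hN⟩ := l.finite
    exact ⟨max N (i + 1), fun n hn => by
      rw [Function.update_of_ne (by omega), hN n (by omega)]⟩

theorem setRow_covByAt {l : Ptn} {i v : ℕ} (hlo : l.parts (i + 1) ≤ v)
    (hhi : ∀ j < i, v ≤ l.parts j) (hv : v + 1 = l.parts i) :
    (l.setRow i v hlo hhi).CovByAt l i :=
  ⟨by simp [setRow, hv], fun k hk => by simp [setRow, hk]⟩

theorem covByAt_setRow {l : Ptn} {i v : ℕ} (hlo : l.parts (i + 1) ≤ v)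
    (hhi : ∀ j < i, v ≤ l.parts j) (hv : v = l.parts i + 1) :
    l.CovByAt (l.setRow i v hlo hhi) i :=
  ⟨by simp [setRow, hv], fun k hk => by simp [setRow, hk]⟩

theorem lt_size_of_parts_pos {l : Ptn} {i : ℕ} (h : 0 < l.parts i) : i < l.size := by
  by_contra hi
  have := parts_eq_zero_of_size_le (l := l) (by omega : l.size ≤ i)
  omega

theorem exists_covByAt_left_iff {l : Ptn} {i : ℕ} :
    (∃ mu : Ptn, mu.CovByAt l i) ↔ l.parts (i + 1) < l.parts i := by
  constructor
  · rintro ⟨mu, hmu⟩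
    have := hmu.1
    have := hmu.2 (i + 1) (by omega)
    have := mu.antitone i (i + 1) (by omega)
    omega
  · intro h
    exact ⟨_, setRow_covByAt (v := l.parts i - 1) (by omega)
      (fun j hj => (Nat.sub_le _ _).trans (l.antitone j i hj.le)) (by omega)⟩

theorem exists_covByAt_right_iff {l : Ptn} {i : ℕ} :
    (∃ mu : Ptn, l.CovByAt mu i) ↔ i = 0 ∨ l.parts i < l.parts (i - 1) := by
  constructor
  · rintro ⟨mu, hmu⟩
    by_cases hi : i = 0
    · exact Or.inl hi
    · have := hmu.1
      have := hmu.2 (i - 1) (by omega)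
      have := mu.antitone (i - 1) i (by omega)
      omega
  · intro h
    refine ⟨_, covByAt_setRow (v := l.parts i + 1) (by have := l.antitone i (i + 1); omega)
      (fun j hj => ?_) rfl⟩
    have := l.antitone j (i - 1) (by omega)
    omega

theorem card_lowerCovers (l : Ptn) :
    #(lowerCovers l) = #((range l.size).filter fun i => l.parts (i + 1) < l.parts i) := by
  refine card_nbij (fun mu => coverRow mu l) (fun mu hmu => ?_) (fun mu hmu nu hnu h => ?_)
    (fun i hi => ?_)
  · have hrow := (mem_lowerCovers.1 hmu).covByAt_coverRow
    have hlt := exists_covByAt_left_iff.1 ⟨mu, hrow⟩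
    exact mem_filter.2 ⟨mem_range.2 (lt_size_of_parts_pos (i := coverRow mu l) (by omega)), hlt⟩
  · have h : coverRow mu l = coverRow nu l := h
    have hnu := (mem_lowerCovers.1 hnu).covByAt_coverRow
    exact (mem_lowerCovers.1 hmu).covByAt_coverRow.unique_left (h ▸ hnu)
  · obtain ⟨mu, hmu⟩ := exists_covByAt_left_iff.2 (mem_filter.1 hi).2
    exact ⟨mu, mem_lowerCovers.2 ⟨i, hmu⟩, hmu.coverRow_eq⟩

theorem card_upperCovers (l : Ptn) :
    #(upperCovers l) =
      #((range (l.size + 1)).filter fun i => i = 0 ∨ l.parts i < l.parts (i - 1)) := by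
  refine card_nbij (fun mu => coverRow l mu) (fun mu hmu => ?_) (fun mu hmu nu hnu h => ?_)
    (fun i hi => ?_)
  · have hrow := (mem_upperCovers.1 hmu).covByAt_coverRow
    have hlt := exists_covByAt_right_iff.1 ⟨mu, hrow⟩
    refine mem_filter.2 ⟨mem_range.2 ?_, hlt⟩
    show coverRow l mu < l.size + 1
    rcases hlt with h0 | hlt
    · omega
    · have := lt_size_of_parts_pos (by omega : 0 < l.parts (coverRow l mu - 1))
      omega
  · have h : coverRow l mu = coverRow l nu := h
    have hnu := (mem_upperCovers.1 hnu).covByAt_coverRow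
    exact (mem_upperCovers.1 hmu).covByAt_coverRow.unique_right (h ▸ hnu)
  · obtain ⟨mu, hmu⟩ := exists_covByAt_right_iff.2 (mem_filter.1 hi).2
    exact ⟨mu, mem_upperCovers.2 ⟨i, hmu⟩, hmu.coverRow_eq⟩

/-- A cell can be added in row `0`, and in row `i + 1` exactly when one can be removed from
row `i`. -/
theorem card_upperCovers_eq (l : Ptn) : #(upperCovers l) = #(lowerCovers l) + 1 := by
  have hrows : ((range (l.size + 1)).filter fun i => i = 0 ∨ l.parts i < l.parts (i - 1)) =
      insert 0 (((range l.size).filter fun i => l.parts (i + 1) < l.parts i).image (· + 1)) := by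
    ext i
    simp only [mem_filter, mem_range, mem_insert, mem_image]
    rcases i with _ | i
    · simp
    · simp only [Nat.add_sub_cancel, Nat.add_right_cancel_iff, exists_eq_right]
      omega
  rw [card_upperCovers, card_lowerCovers, hrows, card_insert_of_notMem (by simp),
    card_image_of_injective _ (add_left_injective 1)]

end Ptn

def IsStdFilling (S : Set (ℕ × ℕ)) (n : ℕ) (σ : ℕ × ℕ → ℕ) : Prop :=
  (∀ p : ℕ × ℕ, p ∉ S → σ p = 0) ∧
  Set.BijOn σ S (Set.Icc 1 n) ∧
  (∀ p ∈ S, ∀ q ∈ S, p.1 = q.1 → p.2 < q.2 → σ p < σ q) ∧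
  (∀ p ∈ S, ∀ q ∈ S, p.2 = q.2 → p.1 < q.1 → σ p < σ q)

theorem isSYT_iff {lam : Ptn} {σ : ℕ × ℕ → ℕ} :
    IsSYT lam σ ↔ IsStdFilling lam.ycells lam.size σ := Iff.rfl

def IsCornerCell (S : Set (ℕ × ℕ)) (p : ℕ × ℕ) : Prop :=
  ∀ q ∈ S, ¬(p.1 = q.1 ∧ p.2 < q.2) ∧ ¬(p.2 = q.2 ∧ p.1 < q.1)

theorem IsStdFilling.isCornerCell {S : Set (ℕ × ℕ)} {n : ℕ} {σ : ℕ × ℕ → ℕ}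
    (h : IsStdFilling S n σ) {p : ℕ × ℕ} (hp : p ∈ S) (hσp : σ p = n) :
    IsCornerCell S p := by
  intro q hq
  have := (h.2.1.mapsTo hq).2
  have := h.2.2.1 p hp q hq
  have := h.2.2.2 p hp q hq
  omega

theorem bijOn_update_insert_iff {α : Type*} [DecidableEq α] {S : Set α} {p : α} {n : ℕ}
    {τ : α → ℕ} (hp : p ∉ S) (hS : ∀ q ∈ S, Function.update τ p (n + 1) q = τ q) :
    Set.BijOn (Function.update τ p (n + 1)) (insert p S) (Set.Icc 1 (n + 1)) ↔
      Set.BijOn τ S (Set.Icc 1 n) := by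
  have hIcc : Set.Icc 1 (n + 1) = insert (n + 1) (Set.Icc 1 n) := by
    ext k
    simp only [Set.mem_Icc, Set.mem_insert_iff]
    omega
  rw [hIcc]
  nth_rw 2 [← Function.update_self p (n + 1) τ]
  rw [Set.BijOn.insert_iff hp (by simp)]
  exact Set.EqOn.bijOn_iff hS

theorem isStdFilling_insert_update_iff {S : Set (ℕ × ℕ)} {p : ℕ × ℕ} {n : ℕ}
    {τ : ℕ × ℕ → ℕ} (hp : p ∉ S) (hτp : τ p = 0) (hcorner : IsCornerCell S p) :
    IsStdFilling (insert p S) (n + 1) (Function.update τ p (n + 1)) ↔ IsStdFilling S n τ := by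
  have hS : ∀ q ∈ S, Function.update τ p (n + 1) q = τ q :=
    fun q hq => Function.update_of_ne (ne_of_mem_of_not_mem hq hp) _ _
  have hbij := bijOn_update_insert_iff (n := n) hp hS
  constructor
  · rintro ⟨hzero, hbij', hrow, hcol⟩
    refine ⟨fun q hq => ?_, hbij.1 hbij', ?_, ?_⟩
    · rcases eq_or_ne q p with rfl | hqp
      · exact hτp
      · rw [← Function.update_of_ne hqp (n + 1) τ]
        exact hzero q (by simp [hqp, hq])
    all_goals
      intro x hx y hy h1 h2
      rw [← hS x hx, ← hS y hy]
      first
        | exact hrow x (Set.mem_insert_of_mem _ hx) y (Set.mem_insert_of_mem _ hy) h1 h2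
        | exact hcol x (Set.mem_insert_of_mem _ hx) y (Set.mem_insert_of_mem _ hy) h1 h2
  · rintro ⟨hzero, hbij', hrow, hcol⟩
    refine ⟨fun q hq => ?_, hbij.2 hbij', ?_, ?_⟩
    · rw [Set.mem_insert_iff, not_or] at hq
      rw [Function.update_of_ne hq.1]
      exact hzero q hq.2
    all_goals
      rintro x (rfl | hx) y (rfl | hy) h1 h2
      · omega
      · have := hcorner y hy
        omega
      · have := hbij'.mapsTo hx
        simp only [Set.mem_Icc] at this
        rw [hS x hx, Function.update_self]
        omega
      · rw [hS x hx, hS y hy]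
        first
          | exact hrow x hx y hy h1 h2
          | exact hcol x hx y hy h1 h2

namespace Ptn

open Finset

theorem CovBy.isCornerCell {mu lam : Ptn} (h : mu.CovBy lam) :
    IsCornerCell mu.ycells (coverCell mu lam) := by
  obtain ⟨i, hi⟩ := h
  rw [coverCell, hi.coverRow_eq]
  rintro ⟨r, c⟩ ⟨hr, hc, hcr⟩
  dsimp only at hr hc hcr ⊢
  have := hi.1
  have := mu.antitone i (r - 1)
  omega

theorem exists_covBy_coverCell_eq {lam : Ptn} {p : ℕ × ℕ} (hp : p ∈ lam.ycells)
    (hcorner : IsCornerCell lam.ycells p) : ∃ mu, mu.CovBy lam ∧ coverCell mu lam = p := by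
  obtain ⟨r, c⟩ := p
  obtain ⟨hr, hc, hcr⟩ := hp
  dsimp only at hr hc hcr
  have hright := hcorner (r, c + 1)
  have hbelow := hcorner (r + 1, c)
  simp only [mem_ycells, Nat.add_sub_cancel, true_and] at hright hbelow
  obtain ⟨mu, hmu⟩ := (exists_covByAt_left_iff (l := lam) (i := r - 1)).2 (by
    rw [show r - 1 + 1 = r by omega]
    omega)
  refine ⟨mu, ⟨_, hmu⟩, ?_⟩
  rw [coverCell, hmu.coverRow_eq]
  ext <;> dsimp only <;> omega

/-- `f^λ` -/
noncomputable def numSYT (lam : Ptn) : ℕ := {σ : ℕ × ℕ → ℕ | IsSYT lam σ}.ncard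

theorem finite_setOf_isSYT (lam : Ptn) : {σ : ℕ × ℕ → ℕ | IsSYT lam σ}.Finite := by
  have := lam.ycells_finite.to_subtype
  rw [← Set.finite_coe_iff]
  refine Finite.of_injective (β := lam.ycells → Fin (lam.size + 1))
    (fun σ p => ⟨σ.1 p, Nat.lt_succ_of_le (σ.2.2.1.mapsTo p.2).2⟩) fun σ τ h => ?_
  refine Subtype.ext (funext fun p => ?_)
  by_cases hp : p ∈ lam.ycells
  · exact congrArg Fin.val (congrFun h ⟨p, hp⟩)
  · rw [σ.2.1 p hp, τ.2.1 p hp]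

theorem numSYT_emptyPtn : numSYT emptyPtn = 1 := by
  have : {σ : ℕ × ℕ → ℕ | IsSYT emptyPtn σ} = {fun _ => 0} := by
    ext σ
    simp [IsSYT, ycells_emptyPtn, size_emptyPtn, funext_iff]
  rw [numSYT, this, Set.ncard_singleton]

theorem setOf_isSYT_eq_biUnion {lam : Ptn} (h : lam.size ≠ 0) :
    {σ : ℕ × ℕ → ℕ | IsSYT lam σ} = ⋃ mu ∈ lowerCovers lam,
      (Function.update · (coverCell mu lam) lam.size) '' {τ | IsSYT mu τ} := by
  ext σ
  simp only [Set.mem_ofPred_eq, Set.mem_iUnion, Set.mem_image, mem_lowerCovers, exists_prop]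
  constructor
  · intro hσ
    obtain ⟨p, hp, hσp⟩ :=
      hσ.2.1.surjOn (⟨by omega, le_rfl⟩ : lam.size ∈ Set.Icc 1 lam.size)
    obtain ⟨mu, hmu, rfl⟩ :=
      exists_covBy_coverCell_eq hp ((isSYT_iff.1 hσ).isCornerCell hp hσp)
    refine ⟨mu, hmu, Function.update σ (coverCell mu lam) 0, ?_, by simp [← hσp]⟩
    -- `σ` is recovered from `update σ p 0` by putting `|λ| = |μ| + 1` back at `p`.
    rw [isSYT_iff, ← isStdFilling_insert_update_iff hmu.coverCell_notMem
      (Function.update_self ..) hmu.isCornerCell, Function.update_idem, ← hmu.size_eq,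
      ← hmu.ycells_eq, ← hσp, Function.update_eq_self, hσp]
    exact hσ
  · rintro ⟨mu, hmu, τ, hτ, rfl⟩
    have hτp := hτ.1 _ hmu.coverCell_notMem
    rw [isSYT_iff, hmu.ycells_eq, hmu.size_eq]
    exact (isStdFilling_insert_update_iff hmu.coverCell_notMem hτp hmu.isCornerCell).2 hτ

theorem numSYT_eq_sum_lowerCovers {lam : Ptn} (h : lam.size ≠ 0) :
    numSYT lam = ∑ mu ∈ lowerCovers lam, numSYT mu := by
  rw [numSYT, setOf_isSYT_eq_biUnion h, ← Finset.set_biUnion_coe,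
    Set.Finite.ncard_biUnion (lowerCovers lam).finite_toSet
      (fun mu _ => (finite_setOf_isSYT mu).image _), finsum_mem_coe_finset]
  · refine sum_congr rfl fun mu hmu =>
      Set.InjOn.ncard_image fun σ hσ τ hτ hστ => funext fun q => ?_
    have hp := (mem_lowerCovers.1 hmu).coverCell_notMem
    rcases eq_or_ne q (coverCell mu lam) with rfl | hq
    · rw [hσ.1 _ hp, hτ.1 _ hp]
    · simpa [Function.update_of_ne hq] using congrFun hστ q
  · intro mu hmu nu hnu hne
    refine Set.disjoint_left.2 ?_
    rintro _ ⟨σ, -, rfl⟩ ⟨τ, hτ, hστ⟩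
    have hmu := mem_lowerCovers.1 hmu
    have hnu := mem_lowerCovers.1 hnu
    have hcell : coverCell mu lam ≠ coverCell nu lam :=
      fun h => hne (hmu.coverCell_injective hnu h)
    have hmem : coverCell mu lam ∈ nu.ycells := by
      have := hnu.ycells_eq ▸ hmu.ycells_eq ▸ Set.mem_insert _ _
      exact (Set.mem_insert_iff.1 this).resolve_left hcell
    have := congrFun hστ (coverCell mu lam)
    simp only [Function.update_of_ne hcell, Function.update_self] at this
    have := (hτ.2.1.mapsTo hmem).2
    have := hnu.size_eq
    omega

theorem sum_lowerCovers_numSYT (lam : Ptn) :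
    ∑ mu ∈ lowerCovers lam, numSYT mu = if lam.size = 0 then 0 else numSYT lam := by
  split_ifs with h
  · rw [lowerCovers_eq_empty h, sum_empty]
  · exact (numSYT_eq_sum_lowerCovers h).symm

noncomputable def ofSize (n : ℕ) : Finset Ptn :=
  ((finite_setOf_size_le n).subset fun l (h : l.size = n) => h.le).toFinset

@[simp]
theorem mem_ofSize {l : Ptn} {n : ℕ} : l ∈ ofSize n ↔ l.size = n :=
  Set.Finite.mem_toFinset _

theorem sum_upperCovers_sum_lowerCovers (lam : Ptn) (g : Ptn → ℕ) :
    ∑ mu ∈ upperCovers lam, ∑ nu ∈ lowerCovers mu, g nu =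
      ∑ nu ∈ ofSize lam.size, #(upperCovers lam ∩ upperCovers nu) * g nu := by
  rw [sum_comm' (t' := ofSize lam.size) (s' := fun nu => upperCovers lam ∩ upperCovers nu)]
  · simp only [sum_const, smul_eq_mul]
  · intro mu nu
    simp only [mem_inter, mem_upperCovers, mem_lowerCovers, mem_ofSize]
    constructor
    · rintro ⟨hmu, hnu⟩
      have := hmu.size_eq
      have := hnu.size_eq
      exact ⟨⟨hmu, hnu⟩, by omega⟩
    · rintro ⟨⟨hmu, hnu⟩, -⟩
      exact ⟨hmu, hnu⟩

theorem sum_lowerCovers_sum_upperCovers (lam : Ptn) (g : Ptn → ℕ) :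
    ∑ kap ∈ lowerCovers lam, ∑ nu ∈ upperCovers kap, g nu =
      ∑ nu ∈ ofSize lam.size, #(lowerCovers lam ∩ lowerCovers nu) * g nu := by
  rw [sum_comm' (t' := ofSize lam.size) (s' := fun nu => lowerCovers lam ∩ lowerCovers nu)]
  · simp only [sum_const, smul_eq_mul]
  · intro kap nu
    simp only [mem_inter, mem_upperCovers, mem_lowerCovers, mem_ofSize]
    constructor
    · rintro ⟨hkap, hnu⟩
      have := hkap.size_eq
      have := hnu.size_eq
      exact ⟨⟨hkap, hnu⟩, by omega⟩
    · rintro ⟨⟨hkap, hnu⟩, -⟩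
      exact ⟨hkap, hnu⟩

theorem sum_upperCovers_numSYT (lam : Ptn) :
    ∑ mu ∈ upperCovers lam, numSYT mu = (lam.size + 1) * numSYT lam := by
  induction hn : lam.size using Nat.strong_induction_on generalizing lam with
  | _ n ih =>
  have hcard (nu : Ptn) : #(upperCovers lam ∩ upperCovers nu) * numSYT nu =
      #(lowerCovers lam ∩ lowerCovers nu) * numSYT nu + if nu = lam then numSYT lam else 0 := by
    split_ifs with h
    · rw [h, inter_self, inter_self, card_upperCovers_eq, add_mul, one_mul]
    · rw [card_upperCovers_inter (Ne.symm h), add_zero]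
  calc ∑ mu ∈ upperCovers lam, numSYT mu
      = ∑ mu ∈ upperCovers lam, ∑ nu ∈ lowerCovers mu, numSYT nu :=
        sum_congr rfl fun mu hmu => numSYT_eq_sum_lowerCovers (by
          rw [(mem_upperCovers.1 hmu).size_eq]; omega)
    _ = ∑ kap ∈ lowerCovers lam, ∑ nu ∈ upperCovers kap, numSYT nu + numSYT lam := by
        rw [sum_upperCovers_sum_lowerCovers, sum_lowerCovers_sum_upperCovers,
          sum_congr rfl fun nu _ => hcard nu, sum_add_distrib, sum_ite_eq',
          if_pos (mem_ofSize.2 rfl)]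
    _ = ∑ kap ∈ lowerCovers lam, n * numSYT kap + numSYT lam := by
        congr 1
        refine sum_congr rfl fun kap hkap => ?_
        have hsize := (mem_lowerCovers.1 hkap).size_eq
        rw [ih kap.size (by omega) kap rfl]
        congr 1
        omega
    _ = (n + 1) * numSYT lam := by
        rw [← mul_sum, sum_lowerCovers_numSYT, hn]
        split_ifs with h
        · simp [h]
        · ring

theorem mem_lowerCovers_union_upperCovers {lam mu : Ptn} :
    mu ∈ lowerCovers lam ∪ upperCovers lam ↔ mu.Differs lam := by
  rw [mem_union, mem_lowerCovers, mem_upperCovers, differs_iff, or_comm]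

end Ptn

open Nat in
/-- For `n > l` this vanishes through the binomial coefficient; for `n = l` truncated
subtraction gives `(l - n - 1)‼ = 0‼ = 1`, the convention `(-1)!! = 1`. -/
def otNumber (l n : ℕ) : ℕ := if Even (l - n) then l.choose n * (l - n - 1)‼ else 0

theorem otNumber_zero_left (n : ℕ) : otNumber 0 n = if n = 0 then 1 else 0 := by
  rcases n with _ | n <;> simp [otNumber]

open Nat in
theorem otNumber_succ (l n : ℕ) :
    otNumber (l + 1) n =
      (if n = 0 then 0 else otNumber l (n - 1)) + (n + 1) * otNumber l (n + 1) := by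
  rcases n with _ | m
  · rcases l with _ | j
    · simp [otNumber]
    · simp only [otNumber, if_true, Nat.sub_zero, Nat.choose_zero_right, one_mul, zero_add,
        Nat.choose_one_right, Nat.add_sub_cancel, doubleFactorial_add_one]
      simp [Nat.even_add_one, parity_simps]
  · rcases le_or_gt m l with hml | hlm
    · obtain ⟨d, rfl⟩ := Nat.exists_eq_add_of_le hml
      rcases d with _ | _ | d
      · simp [otNumber, Nat.choose_eq_zero_of_lt (by omega : m < m + 1 + 1)]
      · simp [otNumber, Nat.even_add_one]
      · have hstep := Nat.choose_succ_right_eq (m + (d + 1 + 1)) (m + 1)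
        rw [show m + (d + 1 + 1) - (m + 1) = d + 1 by omega] at hstep
        simp only [otNumber, show m + (d + 1 + 1) + 1 - (m + 1) = d + 1 + 1 by omega,
          show m + (d + 1 + 1) - m = d + 1 + 1 by omega,
          show m + (d + 1 + 1) - (m + 1 + 1) = d by omega, Nat.add_sub_cancel, Nat.succ_ne_zero,
          if_false, Nat.choose_succ_succ, Nat.succ_eq_add_one, Nat.even_add_one, not_not,
          doubleFactorial_add_one]
        split_ifs
        · linear_combination (d - 1)‼ * hstep.symm
        · rfl
    · simp [otNumber, Nat.choose_eq_zero_of_lt hlm,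
        Nat.choose_eq_zero_of_lt (by omega : l + 1 < m + 1),
        Nat.choose_eq_zero_of_lt (by omega : l < m + 1 + 1)]

open Ptn

theorem setOf_isOT_zero (lam : Ptn) :
    {e | IsOT lam 0 e} = if lam = emptyPtn then {[emptyPtn]} else ∅ := by
  ext e
  constructor
  · rintro ⟨hlen, hhead, hlast, -⟩
    obtain ⟨a, rfl⟩ := List.length_eq_one_iff.1 hlen
    simp_all
  · split_ifs with h
    · rintro rfl
      exact ⟨rfl, rfl, by simp [h], List.isChain_singleton _⟩
    · exact False.elim

theorem setOf_isOT_succ (lam : Ptn) (l : ℕ) :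
    {e | IsOT lam (l + 1) e} =
      ⋃ mu ∈ lowerCovers lam ∪ upperCovers lam, (· ++ [lam]) '' {e | IsOT mu l e} := by
  ext e
  simp only [Set.mem_ofPred_eq, Set.mem_iUnion, Set.mem_image, mem_lowerCovers_union_upperCovers,
    exists_prop]
  constructor
  · rintro ⟨hlen, hhead, hlast, hchain⟩
    obtain rfl | ⟨e', b, rfl⟩ := e.eq_nil_or_concat'
    · simp at hlen
    have hb : b = lam := by simpa using hlast
    subst b
    obtain rfl | ⟨e'', mu, rfl⟩ := e'.eq_nil_or_concat'
    · simp at hlen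
    change List.IsChain _ _ at hchain
    rw [List.isChain_append] at hchain
    refine ⟨mu, hchain.2.2 mu (by simp) lam (by simp), e'' ++ [mu],
      ⟨by simpa using hlen, ?_, by simp, hchain.1⟩, rfl⟩
    simpa [List.head?_append] using hhead
  · rintro ⟨mu, hmu, e', ⟨hlen, hhead, hlast, hchain⟩, rfl⟩
    refine ⟨by simp [hlen], by simp [List.head?_append, hhead], by simp, ?_⟩
    exact List.isChain_append.2 ⟨hchain, List.isChain_singleton _, by simp [hlast, hmu]⟩

theorem finite_setOf_isOT (lam : Ptn) (l : ℕ) : {e | IsOT lam l e}.Finite := by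
  induction l generalizing lam with
  | zero =>
    rw [setOf_isOT_zero]
    split_ifs <;> simp
  | succ l ih =>
    rw [setOf_isOT_succ]
    exact Set.Finite.biUnion (Finset.finite_toSet _) fun mu _ => (ih mu).image _

theorem ncard_setOf_isOT_succ (lam : Ptn) (l : ℕ) :
    {e | IsOT lam (l + 1) e}.ncard = ∑ mu ∈ lowerCovers lam, {e | IsOT mu l e}.ncard +
      ∑ mu ∈ upperCovers lam, {e | IsOT mu l e}.ncard := by
  rw [setOf_isOT_succ, ← Finset.set_biUnion_coe, Set.Finite.ncard_biUnion (Finset.finite_toSet _)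
    (fun mu _ => (finite_setOf_isOT mu l).image _), finsum_mem_coe_finset, Finset.sum_union]
  · simp only [Set.ncard_image_of_injective _ (List.append_left_injective [lam])]
  · refine Finset.disjoint_left.2 fun mu hlow hup => ?_
    have := (mem_lowerCovers.1 hlow).size_eq
    have := (mem_upperCovers.1 hup).size_eq
    omega
  · intro mu _ nu _ hne
    refine Set.disjoint_left.2 ?_
    rintro _ ⟨e, he, rfl⟩ ⟨e', he', hee'⟩
    obtain rfl := List.append_left_injective [lam] hee'
    exact hne (Option.some_injective _ (he.2.2.1.symm.trans he'.2.2.1))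

theorem ncard_setOf_isOT (lam : Ptn) (l : ℕ) :
    {e | IsOT lam l e}.ncard = otNumber l lam.size * numSYT lam := by
  induction l generalizing lam with
  | zero =>
    rw [setOf_isOT_zero, otNumber_zero_left]
    by_cases h : lam = emptyPtn
    · simp [h, size_emptyPtn, numSYT_emptyPtn]
    · simp [h, mt size_eq_zero_iff.1 h]
  | succ l ih =>
    have hdown : ∑ mu ∈ lowerCovers lam, {e | IsOT mu l e}.ncard =
        otNumber l (lam.size - 1) * ∑ mu ∈ lowerCovers lam, numSYT mu := by
      rw [Finset.mul_sum]
      refine Finset.sum_congr rfl fun mu hmu => ?_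
      rw [ih, (mem_lowerCovers.1 hmu).size_eq, Nat.add_sub_cancel]
    have hup : ∑ mu ∈ upperCovers lam, {e | IsOT mu l e}.ncard =
        otNumber l (lam.size + 1) * ∑ mu ∈ upperCovers lam, numSYT mu := by
      rw [Finset.mul_sum]
      refine Finset.sum_congr rfl fun mu hmu => ?_
      rw [ih, (mem_upperCovers.1 hmu).size_eq]
    rw [ncard_setOf_isOT_succ, hdown, hup, sum_lowerCovers_numSYT, sum_upperCovers_numSYT,
      otNumber_succ]
    split_ifs <;> ring

theorem statement18_general (lam : Ptn) (l : ℕ) (h2 : Even (l - lam.size)) :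
    {e : List Ptn | IsOT lam l e}.ncard
      = Nat.choose l lam.size * Nat.doubleFactorial (l - lam.size - 1)
          * {σ : ℕ × ℕ → ℕ | IsSYT lam σ}.ncard := by
  rw [ncard_setOf_isOT, otNumber, if_pos h2, numSYT]

/-- `|OT(λ,l)| = C(l,|λ|) · (l-|λ|-1)!! · f^λ` when `(l-|λ|)/2` is a nonnegative
integer. -/
theorem statement18 (lam : Ptn) (l : ℕ) (h1 : lam.size ≤ l) (h2 : Even (l - lam.size)) :
    {e : List Ptn | IsOT lam l e}.ncard
      = Nat.choose l lam.size * Nat.doubleFactorial (l - lam.size - 1)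
          * {σ : ℕ × ℕ → ℕ | IsSYT lam σ}.ncard :=
  statement18_general lam l h2
end
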